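/- Let q be any prime power and F = GF(q). Let u, v0 ∈ F with v0 ≠ 0 be such that v0·λ^2 + u·v0·λ − 1 ≠ 0 for all λ ∈ F. Let W be the 4-dimensional subspace of quadratic forms over F spanned by v0^{-1}·X0^2 + u·X0X1 − X1^2, X0X2, X1X2 and X2^2 (the web of conics associated with the line-orbit o_{10}). Then among the conics of W there is exactly 1 double line, exactly q^2+q pairs of real lines, exactly q^2 pairs of imaginary lines, and exactly q^3−q^2 nonsingular conics. -/

import Mathlib

open Matrix

namespace Conics

/-- Coefficient vector (a0,...,a5) of the product of two linear forms
`(b0*X0+b1*X1+b2*X2)*(c0*X0+c1*X1+c2*X2)`, where the quadratic form with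
coefficient vector `a` is `a0*X0^2 + a1*X0*X1 + a2*X0*X2 + a3*X1^2 + a4*X1*X2 + a5*X2^2`. -/
def mulLin {F : Type} [Field F] (b c : Fin 3 → F) : Fin 6 → F :=
  ![b 0 * c 0, b 0 * c 1 + b 1 * c 0, b 0 * c 2 + b 2 * c 0,
    b 1 * c 1, b 1 * c 2 + b 2 * c 1, b 2 * c 2]

/-- The discriminant of the quadratic form with coefficient vector `a`. -/
def disc {F : Type} [Field F] (a : Fin 6 → F) : F :=
  4 * a 0 * a 3 * a 5 + a 1 * a 2 * a 4 - a 0 * a 4 ^ 2 - a 3 * a 2 ^ 2 - a 5 * a 1 ^ 2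

/-- `f_a` is a double line: `f_a = c * l^2` for a nonzero scalar `c` and nonzero linear form `l`. -/
def IsDoubleLine {F : Type} [Field F] (a : Fin 6 → F) : Prop :=
  ∃ (c : F) (l : Fin 3 → F), c ≠ 0 ∧ l ≠ 0 ∧ a = c • mulLin l l

/-- `f_a` is a pair of (distinct) real lines: `f_a = l1 * l2` with neither linear form a scalar
multiple of the other. -/
def IsRealPair {F : Type} [Field F] (a : Fin 6 → F) : Prop :=
  ∃ l1 l2 : Fin 3 → F, (¬ ∃ t : F, l2 = t • l1) ∧ (¬ ∃ t : F, l1 = t • l2) ∧ a = mulLin l1 l2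

/-- `f_a` is a pair of conjugate imaginary lines: singular, but not a product of two linear
forms over `F`. -/
def IsImagPair {F : Type} [Field F] (a : Fin 6 → F) : Prop :=
  disc a = 0 ∧ ¬ ∃ l1 l2 : Fin 3 → F, a = mulLin l1 l2

/-- `f_a` is a nonsingular conic. -/
def IsNonsingular {F : Type} [Field F] (a : Fin 6 → F) : Prop :=
  disc a ≠ 0

/-- The number of conics of a given type `T` in a linear system `W` (a subspace of the space of
quadratic forms, identified with `F^6`): the number of 1-dimensional subspaces `⟨a⟩` of `W`,
`a ≠ 0`, such that `f_a` has type `T`. -/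
noncomputable def numConics {F : Type} [Field F] (W : Submodule F (Fin 6 → F))
    (T : (Fin 6 → F) → Prop) : ℕ :=
  Set.ncard {P : Submodule F (Fin 6 → F) |
    ∃ a : Fin 6 → F, a ≠ 0 ∧ a ∈ W ∧ T a ∧ P = Submodule.span F {a}}

/-- The symmetric 3×3 matrix associated with a point `y` of `PG(5,q)`. -/
def M {F : Type} [Field F] (y : Fin 6 → F) : Matrix (Fin 3) (Fin 3) F :=
  !![y 0, y 1, y 2; y 1, y 3, y 4; y 2, y 4, y 5]

/-- The pairing `B(a,y) = a0*y0 + ... + a5*y5`. -/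
def Bform {F : Type} [Field F] (a y : Fin 6 → F) : F :=
  a 0 * y 0 + a 1 * y 1 + a 2 * y 2 + a 3 * y 3 + a 4 * y 4 + a 5 * y 5

/-- The squab of conics associated with a (nonzero) point `y`: the hyperplane
`{a : B(a,y) = 0}` of the space of quadratic forms. -/
def squab {F : Type} [Field F] (y : Fin 6 → F) : Submodule F (Fin 6 → F) where
  carrier := {a | Bform a y = 0}
  add_mem' := by
    intro a b ha hb
    simp only [Set.mem_setOf_eq, Bform, Pi.add_apply] at *
    linear_combination ha + hb
  zero_mem' := by simp [Bform]
  smul_mem' := by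
    intro c a ha
    simp only [Set.mem_setOf_eq, Bform, Pi.smul_apply, smul_eq_mul] at *
    linear_combination c * ha

/-!
A form of the web is `a0 v0 (v0⁻¹ X0² + u X0X1 - X1²) + X2 (a2 X0 + a4 X1 + a5 X2)`.
The hypothesis on `λ` says that `X0² + u v0 X0X1 - v0 X1²` has no zero on `PG(1,q)`, so a form
with `a0 ≠ 0` does not factor over `F`, while a form with `a0 = 0` is `X2` times a linear form:
the double line `X2²`, or `X2` times one of the `q² + q` other lines. Scaling to `a0 = v0⁻¹`
parametrises the forms with `a0 ≠ 0` by `(a2, a4, a5) ∈ F³`, and their discriminant is affine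
in `a5` with slope `-(u² + 4/v0)`. This slope is nonzero because it is, up to the factor `v0²`,
the discriminant of the rootless quadratic `v0 λ² + u v0 λ - 1`. Hence `q²` of these forms are
singular and `q³ - q²` are nonsingular.
-/

theorem discrim_ne_zero_of_forall_ne_zero {F : Type*} [Field F] [Finite F] {a b c : F}
    (ha : a ≠ 0) (h : ∀ x, a * (x * x) + b * x + c ≠ 0) : discrim a b c ≠ 0 := by
  intro hd
  by_cases h2 : (2 : F) = 0
  · -- in characteristic two every element of a finite field is a square
    have : CharP F 2 := CharTwo.of_one_ne_zero_of_two_eq_zero one_ne_zero h2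
    have hb : b = 0 := by
      refine pow_eq_zero_iff (n := 2) two_ne_zero |>.mp ?_
      rw [discrim] at hd
      linear_combination hd + 2 * a * c * h2
    obtain ⟨s, hs⟩ := isSquare_of_charTwo' (-c / a)
    apply h s
    rw [hb, ← hs]
    field_simp
    ring
  · have : NeZero (2 : F) := ⟨h2⟩
    obtain ⟨x, hx⟩ := exists_quadratic_eq_zero ha ⟨0, by rw [hd, mul_zero]⟩
    exact h x hx

theorem eq_zero_and_eq_zero_of_mul_eq_zero_of_cross {R : Type*} [CommRing R]
    [NoZeroDivisors R] {x y x' y' : R} (h : x * y = 0)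
    (hcross : x * y' + x' * y = 0) (hne : x' * y' ≠ 0) : x = 0 ∧ y = 0 := by
  have hy : y = 0 := by
    have : (x' * y) ^ 2 = 0 := by linear_combination x' * y * hcross - x' * y' * h
    exact (mul_eq_zero.mp (pow_eq_zero_iff two_ne_zero |>.mp this)).resolve_left
      (left_ne_zero_of_mul hne)
  refine ⟨?_, hy⟩
  have : x * y' = 0 := by linear_combination hcross - x' * hy
  exact (mul_eq_zero.mp this).resolve_right (right_ne_zero_of_mul hne)

section

variable {F : Type} [Field F]

theorem disc_smul (k : F) (a : Fin 6 → F) : disc (k • a) = k ^ 3 * disc a := by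
  simp only [disc, Pi.smul_apply, smul_eq_mul]
  ring

theorem disc_mulLin (b c : Fin 3 → F) : disc (mulLin b c) = 0 := by
  simp only [disc, mulLin, Matrix.cons_val]
  ring

theorem numConics_eq_card_of_representatives {ι : Type*} {W : Submodule F (Fin 6 → F)}
    {T : (Fin 6 → F) → Prop} (ψ : ι → Fin 6 → F)
    (hψ : ∀ i, ψ i ≠ 0 ∧ ψ i ∈ W ∧ T (ψ i))
    (hcover : ∀ a, a ≠ 0 → a ∈ W → T a → ∃ i, ∃ c : F, a = c • ψ i)
    (hinj : ∀ i j (c : F), c • ψ i = ψ j → i = j) :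
    numConics W T = Nat.card ι := by
  have hrange : {P : Submodule F (Fin 6 → F) |
      ∃ a, a ≠ 0 ∧ a ∈ W ∧ T a ∧ P = Submodule.span F {a}} =
      Set.range fun i => Submodule.span F {ψ i} := by
    ext P
    constructor
    · rintro ⟨a, ha, haW, hTa, rfl⟩
      obtain ⟨i, c, rfl⟩ := hcover a ha haW hTa
      have hc : c ≠ 0 := by rintro rfl; exact ha (zero_smul F _)
      exact ⟨i, (Submodule.span_singleton_smul_eq hc.isUnit _).symm⟩
    · rintro ⟨i, rfl⟩
      exact ⟨ψ i, hψ i |>.1, hψ i |>.2.1, hψ i |>.2.2, rfl⟩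
  rw [numConics, hrange]
  refine Set.ncard_range_of_injective fun i j hij => ?_
  obtain ⟨c, hc⟩ := Submodule.mem_span_singleton.mp
    (hij ▸ Submodule.mem_span_singleton_self (ψ j))
  exact hinj i j c hc

theorem card_affine_eq_zero {α : Type*} {κ : F} (hκ : κ ≠ 0) (f : α → F) :
    Nat.card {p : α × F // κ * p.2 + f p.1 = 0} = Nat.card α :=
  Nat.card_congr
    { toFun := fun p => p.1.1
      invFun := fun x => ⟨(x, -f x / κ), by field_simp; ring⟩
      left_inv := by
        rintro ⟨⟨x, w⟩, h⟩
        ext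
        · rfl
        · field_simp; linear_combination -h
      right_inv := fun _ => rfl }

end

section WebO10

variable {F : Type} [Field F] (u v0 : F)

def webO10 : Submodule F (Fin 6 → F) where
  carrier := {a | a 1 = u * v0 * a 0 ∧ a 3 = -(v0 * a 0)}
  add_mem' := by
    rintro a b ⟨ha1, ha3⟩ ⟨hb1, hb3⟩
    constructor
    · simp only [Pi.add_apply]; linear_combination ha1 + hb1
    · simp only [Pi.add_apply]; linear_combination ha3 + hb3
  zero_mem' := by simp
  smul_mem' := by
    rintro c a ⟨ha1, ha3⟩
    constructor
    · simp only [Pi.smul_apply, smul_eq_mul]; linear_combination c * ha1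
    · simp only [Pi.smul_apply, smul_eq_mul]; linear_combination c * ha3

variable {u v0}

theorem mem_webO10 {a : Fin 6 → F} :
    a ∈ webO10 u v0 ↔ a 1 = u * v0 * a 0 ∧ a 3 = -(v0 * a 0) :=
  Iff.rfl

theorem span_eq_webO10 (hv0 : v0 ≠ 0) :
    Submodule.span F ({![v0⁻¹, u, 0, -1, 0, 0], ![0, 0, 1, 0, 0, 0],
      ![0, 0, 0, 0, 1, 0], ![0, 0, 0, 0, 0, 1]} : Set (Fin 6 → F)) = webO10 u v0 := by
  apply le_antisymm
  · rw [Submodule.span_le]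
    rintro x (rfl | rfl | rfl | rfl) <;> simp [mem_webO10, hv0]
  · rintro a ⟨h1, h3⟩
    have hdecomp : a = (v0 * a 0) • ![v0⁻¹, u, 0, -1, 0, 0] + a 2 • ![0, 0, 1, 0, 0, 0]
        + a 4 • ![0, 0, 0, 0, 1, 0] + a 5 • ![0, 0, 0, 0, 0, 1] := by
      ext i
      fin_cases i <;> simp [h1, h3] <;> field_simp
    rw [hdecomp]
    refine add_mem (add_mem (add_mem ?_ ?_) ?_) ?_ <;>
      exact Submodule.smul_mem _ _ (Submodule.subset_span (by simp))

theorem eq_mulLin_of_mem_webO10 {a : Fin 6 → F} (ha : a ∈ webO10 u v0) (h0 : a 0 = 0) :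
    a = mulLin ![0, 0, 1] ![a 2, a 4, a 5] := by
  obtain ⟨h1, h3⟩ := ha
  ext i
  fin_cases i <;> simp [mulLin, h0, h1, h3]

/-- On the line `X2 = 0` the form is `a0 (X0^2 + u v0 X0 X1 - v0 X1^2)`, which `hirr` makes
anisotropic. -/
theorem not_exists_mulLin_of_mem_webO10 (hv0 : v0 ≠ 0)
    (hirr : ∀ l : F, v0 * l ^ 2 + u * v0 * l - 1 ≠ 0)
    {a : Fin 6 → F} (ha : a ∈ webO10 u v0) (h0 : a 0 ≠ 0) :
    ¬ ∃ b c : Fin 3 → F, a = mulLin b c := by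
  rintro ⟨b, c, rfl⟩
  obtain ⟨h1, h3⟩ := ha
  simp only [mulLin, Matrix.cons_val] at h0 h1 h3
  have hb0 : b 0 ≠ 0 := left_ne_zero_of_mul h0
  have hc0 : c 0 ≠ 0 := right_ne_zero_of_mul h0
  have hb : b 1 ^ 2 = u * v0 * (b 0 * b 1) + v0 * b 0 ^ 2 :=
    mul_left_cancel₀ hc0 (by linear_combination b 1 * h1 - b 0 * h3)
  apply hirr (-b 1 / (b 0 * v0))
  field_simp
  linear_combination hb

theorem exists_mulLin_iff_of_mem_webO10 (hv0 : v0 ≠ 0)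
    (hirr : ∀ l : F, v0 * l ^ 2 + u * v0 * l - 1 ≠ 0)
    {a : Fin 6 → F} (ha : a ∈ webO10 u v0) :
    (∃ b c : Fin 3 → F, a = mulLin b c) ↔ a 0 = 0 :=
  ⟨fun hprod => by_contra fun h0 => not_exists_mulLin_of_mem_webO10 hv0 hirr ha h0 hprod,
    fun h0 => ⟨_, _, eq_mulLin_of_mem_webO10 ha h0⟩⟩

variable (u v0) in
def normalForm (t r w : F) : Fin 6 → F := ![v0⁻¹, u, t, -1, r, w]

theorem normalForm_mem_webO10 (hv0 : v0 ≠ 0) (t r w : F) :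
    normalForm u v0 t r w ∈ webO10 u v0 := by
  simp [normalForm, mem_webO10, hv0]

theorem normalForm_ne_zero (t r w : F) : normalForm u v0 t r w ≠ 0 :=
  fun h => by simpa [normalForm] using congrFun h 3

theorem eq_smul_normalForm (hv0 : v0 ≠ 0) {a : Fin 6 → F} (ha : a ∈ webO10 u v0)
    (h0 : a 0 ≠ 0) :
    a = (v0 * a 0) •
      normalForm u v0 (a 2 / (v0 * a 0)) (a 4 / (v0 * a 0)) (a 5 / (v0 * a 0)) := by
  obtain ⟨h1, h3⟩ := ha
  ext i
  fin_cases i <;> simp [normalForm, h1, h3] <;> field_simp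

theorem eq_of_smul_normalForm_eq {c t r w t' r' w' : F}
    (h : c • normalForm u v0 t r w = normalForm u v0 t' r' w') :
    t = t' ∧ r = r' ∧ w = w' := by
  have hc : c = 1 := by simpa [normalForm] using congrFun h 3
  subst hc
  simp only [one_smul, normalForm] at h
  exact ⟨congrFun h 2, congrFun h 4, congrFun h 5⟩

theorem disc_normalForm (t r w : F) :
    disc (normalForm u v0 t r w) = -(u ^ 2 + 4 / v0) * w + (u * t * r - r ^ 2 / v0 + t ^ 2) := by
  simp only [disc, normalForm, Matrix.cons_val]
  ring

/-- `v0^2 (u^2 + 4/v0)` is the discriminant of `v0 λ^2 + u v0 λ - 1`. -/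
theorem sq_add_four_div_ne_zero [Finite F] (hv0 : v0 ≠ 0)
    (hirr : ∀ l : F, v0 * l ^ 2 + u * v0 * l - 1 ≠ 0) : u ^ 2 + 4 / v0 ≠ 0 := by
  have hdisc := discrim_ne_zero_of_forall_ne_zero hv0 fun l => by
    simpa only [sq, add_sub_assoc, sub_eq_add_neg] using hirr l
  intro h
  apply hdisc
  rw [discrim]
  field_simp at h
  linear_combination v0 * h

theorem isDoubleLine_iff_of_mem_webO10 (hv0 : v0 ≠ 0)
    (hirr : ∀ l : F, v0 * l ^ 2 + u * v0 * l - 1 ≠ 0) {a : Fin 6 → F} (ha : a ∈ webO10 u v0)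
    (ha0 : a ≠ 0) :
    IsDoubleLine a ↔ a 0 = 0 ∧ a 2 = 0 ∧ a 4 = 0 := by
  constructor
  · rintro ⟨c, l, hc, -, rfl⟩
    have h0 : (c • mulLin l l) 0 = 0 := (exists_mulLin_iff_of_mem_webO10 hv0 hirr ha).1
      ⟨c • l, l, by ext i; fin_cases i <;> simp [mulLin] <;> ring⟩
    have h3 : (c • mulLin l l) 3 = 0 := by rw [ha.2, h0, mul_zero, neg_zero]
    simp only [mulLin, Pi.smul_apply, Matrix.cons_val, smul_eq_mul, mul_eq_zero, hc, or_self,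
      false_or] at h0 h3
    simp [mulLin, h0, h3]
  · rintro ⟨h0, h2, h4⟩
    have h5 : a 5 ≠ 0 := fun h5 => ha0 (by
      rw [eq_mulLin_of_mem_webO10 ha h0, h2, h4, h5]; ext i; fin_cases i <;> simp [mulLin])
    refine ⟨a 5, ![0, 0, 1], h5, by simp, ?_⟩
    rw [eq_mulLin_of_mem_webO10 ha h0]
    ext i; fin_cases i <;> simp [mulLin, h2, h4]

theorem isRealPair_iff_of_mem_webO10 (hv0 : v0 ≠ 0)
    (hirr : ∀ l : F, v0 * l ^ 2 + u * v0 * l - 1 ≠ 0) {a : Fin 6 → F} (ha : a ∈ webO10 u v0)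
    (ha0 : a ≠ 0) :
    IsRealPair a ↔ a 0 = 0 ∧ ¬(a 2 = 0 ∧ a 4 = 0) := by
  constructor
  · rintro ⟨l1, l2, hprop, -, rfl⟩
    have h0 := (exists_mulLin_iff_of_mem_webO10 hv0 hirr ha).1 ⟨l1, l2, rfl⟩
    refine ⟨h0, fun ⟨h2, h4⟩ => hprop ?_⟩
    have h3 : mulLin l1 l2 3 = 0 := by rw [ha.2, h0, mul_zero, neg_zero]
    have h5 : mulLin l1 l2 5 ≠ 0 := fun h5 => ha0 (by
      rw [eq_mulLin_of_mem_webO10 ha h0, h2, h4, h5]; ext i; fin_cases i <;> simp [mulLin])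
    simp only [mulLin, Matrix.cons_val] at h0 h2 h3 h4 h5
    -- both factors are multiples of `X2`
    obtain ⟨hl10, hl20⟩ := eq_zero_and_eq_zero_of_mul_eq_zero_of_cross h0 h2 h5
    obtain ⟨hl11, hl21⟩ := eq_zero_and_eq_zero_of_mul_eq_zero_of_cross h3 h4 h5
    refine ⟨l2 2 / l1 2, ?_⟩
    ext i
    fin_cases i <;> simp [hl10, hl20, hl11, hl21, left_ne_zero_of_mul h5]
  · rintro ⟨h0, h24⟩
    refine ⟨![0, 0, 1], ![a 2, a 4, a 5], ?_, ?_, eq_mulLin_of_mem_webO10 ha h0⟩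
    · rintro ⟨t, ht⟩
      exact h24 ⟨by simpa using congrFun ht 0, by simpa using congrFun ht 1⟩
    · rintro ⟨t, ht⟩
      have ht0 : t ≠ 0 := by rintro rfl; simpa using congrFun ht 2
      exact h24 ⟨by simpa [ht0] using congrFun ht 0, by simpa [ht0] using congrFun ht 1⟩

theorem isImagPair_iff_of_mem_webO10 (hv0 : v0 ≠ 0)
    (hirr : ∀ l : F, v0 * l ^ 2 + u * v0 * l - 1 ≠ 0) {a : Fin 6 → F}
    (ha : a ∈ webO10 u v0) :
    IsImagPair a ↔ a 0 ≠ 0 ∧ disc a = 0 := by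
  rw [IsImagPair, exists_mulLin_iff_of_mem_webO10 hv0 hirr ha, and_comm]

theorem isNonsingular_iff_of_mem_webO10 {a : Fin 6 → F} (ha : a ∈ webO10 u v0) :
    IsNonsingular a ↔ a 0 ≠ 0 ∧ disc a ≠ 0 :=
  ⟨fun h => ⟨fun h0 => h (by rw [eq_mulLin_of_mem_webO10 ha h0, disc_mulLin]), h⟩,
    And.right⟩

theorem numConics_webO10_isDoubleLine (hv0 : v0 ≠ 0)
    (hirr : ∀ l : F, v0 * l ^ 2 + u * v0 * l - 1 ≠ 0) :
    numConics (webO10 u v0) IsDoubleLine = 1 := by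
  have hne : (![0, 0, 0, 0, 0, 1] : Fin 6 → F) ≠ 0 := fun h => by simpa using congrFun h 5
  have hmem : (![0, 0, 0, 0, 0, 1] : Fin 6 → F) ∈ webO10 u v0 := by simp [mem_webO10]
  refine (numConics_eq_card_of_representatives (ι := Unit) (fun _ => ![0, 0, 0, 0, 0, 1])
    (fun _ => ?_) ?_ (fun _ _ _ _ => rfl)).trans Nat.card_unique
  · exact ⟨hne, hmem, (isDoubleLine_iff_of_mem_webO10 hv0 hirr hmem hne).2 (by simp)⟩
  · intro a ha0 ha hT
    obtain ⟨h0, h2, h4⟩ := (isDoubleLine_iff_of_mem_webO10 hv0 hirr ha ha0).1 hT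
    obtain ⟨h1, h3⟩ := ha
    refine ⟨(), a 5, ?_⟩
    ext i
    fin_cases i <;> simp [h0, h1, h2, h3, h4]

theorem numConics_webO10_isRealPair (hv0 : v0 ≠ 0)
    (hirr : ∀ l : F, v0 * l ^ 2 + u * v0 * l - 1 ≠ 0) :
    numConics (webO10 u v0) IsRealPair = Nat.card ((F × F) ⊕ F) := by
  let ψ : (F × F) ⊕ F → Fin 6 → F :=
    Sum.elim (fun p => ![0, 0, 1, 0, p.1, p.2]) (fun w => ![0, 0, 0, 0, 1, w])
  refine numConics_eq_card_of_representatives ψ (fun i => ?_) ?_ ?_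
  · have hmem : ψ i ∈ webO10 u v0 := by cases i <;> simp [ψ, mem_webO10]
    have hne : ψ i ≠ 0 := fun h => by
      cases i
      · simpa [ψ] using congrFun h 2
      · simpa [ψ] using congrFun h 4
    refine ⟨hne, hmem, (isRealPair_iff_of_mem_webO10 hv0 hirr hmem hne).2 ?_⟩
    cases i <;> simp [ψ]
  · intro a ha0 ha hT
    obtain ⟨h0, h24⟩ := (isRealPair_iff_of_mem_webO10 hv0 hirr ha ha0).1 hT
    obtain ⟨h1, h3⟩ := ha
    by_cases h2 : a 2 = 0
    · have h4 : a 4 ≠ 0 := fun h4 => h24 ⟨h2, h4⟩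
      refine ⟨Sum.inr (a 5 / a 4), a 4, ?_⟩
      ext i
      fin_cases i <;> simp [ψ, h0, h1, h2, h3, mul_div_cancel₀ _ h4]
    · refine ⟨Sum.inl (a 4 / a 2, a 5 / a 2), a 2, ?_⟩
      ext i
      fin_cases i <;> simp [ψ, h0, h1, h3, mul_div_cancel₀ _ h2]
  · rintro (⟨r, w⟩ | w) (⟨r', w'⟩ | w') c h <;>
      have h2 := congrFun h 2 <;> have h4 := congrFun h 4 <;> have h5 := congrFun h 5 <;>
      simp_all [ψ]

theorem numConics_webO10_eq_card_normalForm (hv0 : v0 ≠ 0) {T : (Fin 6 → F) → Prop}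
    (Q : F → Prop) (hQ : ∀ k x : F, k ≠ 0 → (Q (k * x) ↔ Q x))
    (hT : ∀ a ∈ webO10 u v0, T a ↔ a 0 ≠ 0 ∧ Q (disc a)) :
    numConics (webO10 u v0) T =
      Nat.card {p : (F × F) × F // Q (disc (normalForm u v0 p.1.1 p.1.2 p.2))} := by
  refine numConics_eq_card_of_representatives (fun p => normalForm u v0 p.1.1.1 p.1.1.2 p.1.2)
    (fun p => ?_) ?_ ?_
  · have hmem := normalForm_mem_webO10 (u := u) hv0 p.1.1.1 p.1.1.2 p.1.2
    exact ⟨normalForm_ne_zero _ _ _, hmem, (hT _ hmem).2 ⟨by simp [normalForm, hv0], p.2⟩⟩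
  · intro a _ ha hTa
    obtain ⟨h0, hQa⟩ := (hT a ha).1 hTa
    have hnf := eq_smul_normalForm hv0 ha h0
    rw [hnf, disc_smul, hQ _ _ (pow_ne_zero 3 (mul_ne_zero hv0 h0))] at hQa
    exact ⟨⟨((_, _), _), hQa⟩, _, hnf⟩
  · rintro ⟨⟨⟨t, r⟩, w⟩, _⟩ ⟨⟨⟨t', r'⟩, w'⟩, _⟩ c h
    obtain ⟨rfl, rfl, rfl⟩ := eq_of_smul_normalForm_eq h
    rfl

theorem card_disc_normalForm_eq_zero [Finite F] (hv0 : v0 ≠ 0)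
    (hirr : ∀ l : F, v0 * l ^ 2 + u * v0 * l - 1 ≠ 0) :
    Nat.card {p : (F × F) × F // disc (normalForm u v0 p.1.1 p.1.2 p.2) = 0} =
      Nat.card (F × F) := by
  simp only [disc_normalForm]
  exact card_affine_eq_zero (neg_ne_zero.mpr (sq_add_four_div_ne_zero hv0 hirr))
    fun x : F × F => u * x.1 * x.2 - x.2 ^ 2 / v0 + x.1 ^ 2

theorem numConics_webO10_isImagPair [Finite F] (hv0 : v0 ≠ 0)
    (hirr : ∀ l : F, v0 * l ^ 2 + u * v0 * l - 1 ≠ 0) :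
    numConics (webO10 u v0) IsImagPair = Nat.card (F × F) := by
  rw [numConics_webO10_eq_card_normalForm hv0 (· = 0) (fun k x hk => by simp [hk])
    fun a ha => isImagPair_iff_of_mem_webO10 hv0 hirr ha]
  exact card_disc_normalForm_eq_zero hv0 hirr

theorem numConics_webO10_isNonsingular [Fintype F] (hv0 : v0 ≠ 0)
    (hirr : ∀ l : F, v0 * l ^ 2 + u * v0 * l - 1 ≠ 0) :
    numConics (webO10 u v0) IsNonsingular = Fintype.card F ^ 3 - Fintype.card F ^ 2 := by
  classical
  rw [numConics_webO10_eq_card_normalForm hv0 (· ≠ 0) (fun k x hk => by simp [hk])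
    fun a ha => isNonsingular_iff_of_mem_webO10 ha]
  have hsplit := Nat.card_congr
    (Equiv.sumCompl fun p : (F × F) × F => disc (normalForm u v0 p.1.1 p.1.2 p.2) = 0)
  rw [Nat.card_sum, card_disc_normalForm_eq_zero hv0 hirr] at hsplit
  simp only [Nat.card_prod, Nat.card_eq_fintype_card (α := F)] at hsplit
  simp only [ne_eq]
  refine Nat.eq_sub_of_add_eq ?_
  linarith

end WebO10

/-- conic counts of the web
`(v0⁻¹X0^2 + uX0X1 - X1^2, X0X2, X1X2, X2^2)` (line-orbit `o_{10}`), where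
`v0·λ^2 + u·v0·λ - 1 ≠ 0` for all `λ ∈ F`. -/
theorem web_o10_conic_counts (F : Type) [Field F] [Fintype F] (q : ℕ)
    (hq : Fintype.card F = q) (u v0 : F) (hv0 : v0 ≠ 0)
    (hirr : ∀ l : F, v0 * l ^ 2 + u * v0 * l - 1 ≠ 0)
    (W : Submodule F (Fin 6 → F))
    (hW : W = Submodule.span F ({![v0⁻¹, u, 0, -1, 0, 0], ![0, 0, 1, 0, 0, 0],
      ![0, 0, 0, 0, 1, 0], ![0, 0, 0, 0, 0, 1]} : Set (Fin 6 → F))) :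
    numConics W IsDoubleLine = 1 ∧
    numConics W IsRealPair = q ^ 2 + q ∧
    numConics W IsImagPair = q ^ 2 ∧
    numConics W IsNonsingular = q ^ 3 - q ^ 2 := by
  subst hW hq
  rw [span_eq_webO10 hv0]
  refine ⟨numConics_webO10_isDoubleLine hv0 hirr, ?_, ?_,
    numConics_webO10_isNonsingular hv0 hirr⟩
  · rw [numConics_webO10_isRealPair hv0 hirr, Nat.card_sum, Nat.card_prod,
      Nat.card_eq_fintype_card]
    ring
  · rw [numConics_webO10_isImagPair hv0 hirr, Nat.card_prod, Nat.card_eq_fintype_card]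
    ring

end Conics
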